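/- Let b ≥ 2, φ = (1+√5)/2, and H(x) = ((b^2-1)^{log_b φ}/√5)·x^{log_b φ}. With h the piecewise linear function through ((b^k-1)/(b^2-1), F_k), we have limsup_{x→∞} (h(x) - H(x)) = 0. -/

import Mathlib

/-!
With `α = log_b φ` we have `b ^ α = φ`, so at the node `ã_k` the function `H` takes the value
`(b^k - 1)^α / √5`, while Binet gives `F_k = (φ^k - ψ^k) / √5 = ((b^k)^α - ψ^k) / √5`.
Since `0 ≤ x^α - (x - 1)^α ≤ x^(α-1) → 0` and `ψ^k → 0`, the node errors `F_k - H(ã_k)` tend to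
zero. Between two nodes `h` is affine and `H` is concave, so `h - H` is convex there and bounded
by its values at the two nodes. Hence `h - H` is eventually below every `ε > 0` and equals the
vanishing node errors along `ã_k → ∞`, so its limsup is `0`.
-/

open Real

/-- ã_k = (b^k-1)/(b^2-1) as a real number. -/
noncomputable def atil (b k : ℕ) : ℝ := ((b : ℝ) ^ k - 1) / ((b : ℝ) ^ 2 - 1)

/-- `h` is the piecewise linear function through the points (a k, y k), k ≥ 0. -/
def IsPLThrough (a y : ℕ → ℝ) (h : ℝ → ℝ) : Prop :=
  ∀ k : ℕ, ∀ x ∈ Set.Icc (a k) (a (k + 1)),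
    h x = y k + (x - a k) * (y (k + 1) - y k) / (a (k + 1) - a k)

open Filter Set Topology
open scoped goldenRatio

theorem Real.rpow_sub_rpow_sub_one_le {α x : ℝ} (hα : α ≤ 1) (hx : 1 ≤ x) :
    x ^ α - (x - 1) ^ α ≤ x ^ (α - 1) := by
  have hx0 : 0 < x := by linarith
  have ht0 : 0 ≤ 1 - x⁻¹ := sub_nonneg.2 (inv_le_one_of_one_le₀ hx)
  have ht1 : 1 - x⁻¹ ≤ 1 := sub_le_self _ (inv_nonneg.2 hx0.le)
  have key : x ^ α * (1 - x⁻¹) ≤ (x - 1) ^ α := calc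
    x ^ α * (1 - x⁻¹) ≤ x ^ α * (1 - x⁻¹) ^ α := by
      gcongr; exact self_le_rpow_of_le_one ht0 ht1 hα
    _ = (x - 1) ^ α := by
      rw [← mul_rpow hx0.le ht0, mul_sub, mul_one, mul_inv_cancel₀ hx0.ne']
  have hexpand : x ^ α * (1 - x⁻¹) = x ^ α - x ^ (α - 1) := by
    rw [rpow_sub_one hx0.ne']; ring
  linarith

theorem Real.tendsto_rpow_sub_rpow_sub_one_atTop {α : ℝ} (hα₀ : 0 ≤ α) (hα₁ : α < 1) :
    Tendsto (fun x : ℝ => x ^ α - (x - 1) ^ α) atTop (𝓝 0) := by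
  have hlim : Tendsto (fun x : ℝ => x ^ (α - 1)) atTop (𝓝 0) := by
    simpa using tendsto_rpow_neg_atTop (y := 1 - α) (by linarith)
  refine squeeze_zero' ?_ ?_ hlim
  · filter_upwards [eventually_ge_atTop 1] with x hx
    exact sub_nonneg.2 (rpow_le_rpow (by linarith) (by linarith) hα₀)
  · filter_upwards [eventually_ge_atTop 1] with x hx
    exact rpow_sub_rpow_sub_one_le hα₁.le hx

theorem StrictMono.exists_ge_mem_Icc_of_tendsto_atTop {β : Type*} [LinearOrder β]
    {t : ℕ → β} (ht : StrictMono t) (ht' : Tendsto t atTop atTop) (N : ℕ) {x : β}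
    (hx : t N < x) : ∃ n ≥ N, x ∈ Icc (t n) (t (n + 1)) := by
  have hshift : StrictMono (fun n => t (n + N)) := fun m n hmn => ht (by omega)
  obtain ⟨n, hn, hn'⟩ := hshift.exists_between_of_tendsto_atTop
    (ht'.comp (tendsto_add_atTop_nat N)) (by simpa using hx)
  exact ⟨n + N, by omega, hn.le, by simpa [Nat.add_right_comm] using hn'⟩

theorem Filter.limsup_eq_of_forall_gt_of_forall_lt {ι β : Type*}
    [ConditionallyCompleteLinearOrder β] [DenselyOrdered β] [NoMaxOrder β] [NoMinOrder β]
    {l : Filter ι} {u : ι → β} {c : β}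
    (hle : ∀ y > c, ∀ᶠ i in l, u i ≤ y) (hge : ∀ y < c, ∃ᶠ i in l, y ≤ u i) :
    limsup u l = c := by
  obtain ⟨y₀, hy₀⟩ := exists_gt c
  obtain ⟨y₁, hy₁⟩ := exists_lt c
  have hbdd : IsBoundedUnder (· ≤ ·) l u := isBoundedUnder_of_eventually_le (hle y₀ hy₀)
  have hcobdd : IsCoboundedUnder (· ≤ ·) l u := .of_frequently_ge (hge y₁ hy₁)
  exact le_antisymm ((limsup_le_iff' hcobdd hbdd).2 hle) ((le_limsup_iff' hcobdd hbdd).2 hge)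

namespace IsPLThrough

variable {a y : ℕ → ℝ} {h : ℝ → ℝ}

theorem apply_node (hh : IsPLThrough a y h) {k : ℕ} (hk : a k ≤ a (k + 1)) : h (a k) = y k := by
  simpa using hh k (a k) ⟨le_rfl, hk⟩

theorem sub_le_max_of_concaveOn (hh : IsPLThrough a y h) {G : ℝ → ℝ} {s : Set ℝ}
    (hG : ConcaveOn ℝ s G) {k : ℕ} (hk : a k < a (k + 1)) (hks : a k ∈ s)
    (hks' : a (k + 1) ∈ s) {x : ℝ} (hx : x ∈ Icc (a k) (a (k + 1))) :
    h x - G x ≤ max (y k - G (a k)) (y (k + 1) - G (a (k + 1))) := by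
  set m := (y (k + 1) - y k) / (a (k + 1) - a k)
  set L : ℝ → ℝ := fun z => y k + (z - a k) * m
  have hL : ConvexOn ℝ s L := ⟨hG.1, fun u _ v _ p q _ _ hpq => le_of_eq <| by
    simp only [L, smul_eq_mul]; linear_combination (a k * m - y k) * hpq⟩
  have hLk : L (a (k + 1)) = y (k + 1) := by
    simp only [L, m]; field_simp [sub_ne_zero.2 hk.ne']; ring
  have hhx : h x = L x := by rw [hh k x hx, mul_div_assoc]
  simpa [hhx, L, hLk] using (hL.sub hG).le_max_of_mem_Icc hks hks' hx

theorem limsup_sub_eq_zero (hh : IsPLThrough a y h) (ha : StrictMono a)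
    (ha' : Tendsto a atTop atTop) {G : ℝ → ℝ} (hG : ConcaveOn ℝ (Ici (a 0)) G)
    (hD : Tendsto (fun k => y k - G (a k)) atTop (𝓝 0)) :
    limsup (fun x => h x - G x) atTop = 0 := by
  have hmem : ∀ k, a k ∈ Ici (a 0) := fun k => ha.monotone (Nat.zero_le k)
  refine limsup_eq_of_forall_gt_of_forall_lt (fun ε hε => ?_) (fun ε hε => ?_)
  · obtain ⟨N, hN⟩ := eventually_atTop.1 (hD.eventually (gt_mem_nhds hε))
    filter_upwards [eventually_gt_atTop (a N)] with x hx
    obtain ⟨k, hkN, hxk⟩ := ha.exists_ge_mem_Icc_of_tendsto_atTop ha' N hx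
    exact (hh.sub_le_max_of_concaveOn hG (ha k.lt_succ_self) (hmem k) (hmem _) hxk).trans
      (max_le (hN k hkN).le (hN (k + 1) (by omega)).le)
  · have hnode : ∀ᶠ k in atTop, ε ≤ h (a k) - G (a k) := by
      filter_upwards [hD.eventually (lt_mem_nhds hε)] with k hk
      rw [hh.apply_node (ha k.lt_succ_self).le]
      exact hk.le
    exact ha'.frequently hnode.frequently

end IsPLThrough

theorem logb_goldenRatio_pos {b : ℝ} (hb : 1 < b) : 0 < logb b φ :=
  logb_pos hb one_lt_goldenRatio

theorem logb_goldenRatio_lt_one {b : ℝ} (hb : φ < b) : logb b φ < 1 := by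
  have hb1 : 1 < b := one_lt_goldenRatio.trans hb
  rw [← logb_self_eq_one hb1]
  exact logb_lt_logb hb1 goldenRatio_pos hb

section atil

variable {b : ℕ}

theorem atil_zero : atil b 0 = 0 := by simp [atil]

theorem cast_sq_sub_one_pos (hb : 2 ≤ b) : (0 : ℝ) < (b : ℝ) ^ 2 - 1 := by
  have hb1 : (1 : ℝ) < b := by exact_mod_cast hb
  nlinarith

theorem strictMono_atil (hb : 2 ≤ b) : StrictMono (atil b) := by
  have hb1 : (1 : ℝ) < b := by exact_mod_cast hb
  have hden := cast_sq_sub_one_pos hb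
  exact fun m n hmn =>
    div_lt_div_of_pos_right (sub_lt_sub_right (pow_lt_pow_right₀ hb1 hmn) 1) hden

theorem tendsto_atil_atTop (hb : 2 ≤ b) : Tendsto (atil b) atTop atTop := by
  have hb1 : (1 : ℝ) < b := by exact_mod_cast hb
  have hden := cast_sq_sub_one_pos hb
  exact (tendsto_atTop_add_const_right _ (-1) (tendsto_pow_atTop_atTop_of_one_lt hb1)
    |>.atTop_div_const hden)

theorem tendsto_fib_sub_rpow_atil (hb : 2 ≤ b) :
    Tendsto (fun k => (Nat.fib k : ℝ) -
      ((b : ℝ) ^ 2 - 1) ^ logb b φ / √5 * atil b k ^ logb b φ) atTop (𝓝 0) := by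
  set α := logb b φ
  have hφb : φ < b := goldenRatio_lt_two.trans_le (by exact_mod_cast hb)
  have hb1 : (1 : ℝ) < b := one_lt_goldenRatio.trans hφb
  have hden := cast_sq_sub_one_pos hb
  have hφ : ((b : ℝ) ^ α) = φ := rpow_logb (by positivity) hb1.ne' goldenRatio_pos
  have hnode : ∀ k : ℕ, (Nat.fib k : ℝ) - ((b : ℝ) ^ 2 - 1) ^ α / √5 * atil b k ^ α =
      ((((b : ℝ) ^ k) ^ α - ((b : ℝ) ^ k - 1) ^ α) - ψ ^ k) / √5 := by
    intro k
    have hbk : (1 : ℝ) ≤ (b : ℝ) ^ k := one_le_pow₀ hb1.le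
    have hpow : ((b : ℝ) ^ k) ^ α = φ ^ k := by
      rw [← rpow_natCast_mul (by positivity), mul_comm, rpow_mul_natCast (by positivity), hφ]
    rw [atil, div_rpow (by linarith) hden.le, coe_fib_eq, hpow]
    field_simp [(rpow_pos_of_pos hden α).ne']
    ring
  have hψ : Tendsto (fun k : ℕ => ψ ^ k) atTop (𝓝 0) :=
    tendsto_pow_atTop_nhds_zero_of_abs_lt_one
      (abs_lt.2 ⟨neg_one_lt_goldenConj, goldenConj_neg.trans one_pos⟩)
  have hgap := (tendsto_rpow_sub_rpow_sub_one_atTop (logb_goldenRatio_pos hb1).le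
    (logb_goldenRatio_lt_one hφb)).comp
    (tendsto_pow_atTop_atTop_of_one_lt hb1)
  simpa [funext hnode] using (hgap.sub hψ).div_const √5

end atil

/-- limsup_{x→∞} (h(x) - H(x)) = 0 where H(x) = ((b²-1)^{log_b φ}/√5)·x^{log_b φ}. -/
theorem stmt17 (b : ℕ) (hb : 2 ≤ b) (h H : ℝ → ℝ)
    (hh : IsPLThrough (atil b) (fun k => (Nat.fib k : ℝ)) h)
    (hH : ∀ x : ℝ, H x = ((b : ℝ) ^ 2 - 1) ^ (Real.log goldenRatio / Real.log b)
      / Real.sqrt 5 * x ^ (Real.log goldenRatio / Real.log b)) :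
    Filter.limsup (fun x : ℝ => h x - H x) Filter.atTop = 0 := by
  have hφb : φ < b := goldenRatio_lt_two.trans_le (by exact_mod_cast hb)
  have hb1 : (1 : ℝ) < b := one_lt_goldenRatio.trans hφb
  simp only [log_div_log] at hH
  have hden := (cast_sq_sub_one_pos hb).le
  have hconc : ConcaveOn ℝ (Ici (atil b 0)) H := by
    rw [atil_zero, funext hH]
    exact (concaveOn_rpow (logb_goldenRatio_pos hb1).le
      (logb_goldenRatio_lt_one hφb).le).smul (by positivity)
  have hnode : Tendsto (fun k => (Nat.fib k : ℝ) - H (atil b k)) atTop (𝓝 0) := by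
    simpa only [hH] using tendsto_fib_sub_rpow_atil hb
  exact hh.limsup_sub_eq_zero (strictMono_atil hb) (tendsto_atil_atTop hb) hconc hnode
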